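/- arXiv:2408.04433 — 2 statements merged into one kernel-verified Lean document; each statement's English description precedes it below -/
import Mathlib

section
/- For all integers m, n ≥ 0 with X_d(m,n) ≠ 0, one has X_d(m,n) > X_d(m+2,n), where X_d(m,n) is the number of strictly convex compositions of n with rank m. (Part of Theorem 4.3 of the paper; strictly convex compositions are the same as strongly unimodal sequences, so X_d(m,n) = u(m,n).) -/
/-- A strictly convex composition of `n` with rank `m`: a triple `(a, c, b)` where `a` is a
strictly increasing list of positive integers, `b` is a strictly decreasing list of positive
integers, `c ≥ 1` is the central part (the peak), every entry of `a` and of `b` is strictly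
less than `c`, `Σ a + c + Σ b = n`, and `(length of b) - (length of a) = m`. -/
def IsStrictConvexComposition (n : ℕ) (m : ℤ) (t : List ℕ × ℕ × List ℕ) : Prop :=
  List.Chain' (fun x y => x < y) t.1 ∧
  List.Chain' (fun x y => y < x) t.2.2 ∧
  1 ≤ t.2.1 ∧
  (∀ x ∈ t.1, 0 < x ∧ x < t.2.1) ∧ (∀ x ∈ t.2.2, 0 < x ∧ x < t.2.1) ∧
  t.1.sum + t.2.1 + t.2.2.sum = n ∧
  (t.2.2.length : ℤ) - (t.1.length : ℤ) = m

/-- `Xd m n`: the number of strictly convex compositions (strongly unimodal sequences)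
of `n` with rank `m`. -/
noncomputable def Xd (m : ℤ) (n : ℕ) : ℕ :=
  Nat.card {t : List ℕ × ℕ × List ℕ // IsStrictConvexComposition n m t}


open List
namespace SCCproof
def cnt (k : ℕ) (l : List ℕ) : ℤ := (l.countP (fun x => k ≤ x) : ℤ)
def D (a b : List ℕ) (k : ℕ) : ℤ := cnt k b - cnt k a

/-- count of elements ≥ k -/


lemma takeWhile_append_all {α} {p : α → Bool} {l₁ l₂ : List α} (h : ∀ x ∈ l₁, p x = true) :
    (l₁ ++ l₂).takeWhile p = l₁ ++ l₂.takeWhile p := by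
  induction l₁ with
  | nil => simp
  | cons a l ih =>
    simp only [cons_append, takeWhile_cons, h a (by simp)]
    simp [ih (fun x hx => h x (by simp [hx]))]

lemma dropWhile_append_all {α} {p : α → Bool} {l₁ l₂ : List α} (h : ∀ x ∈ l₁, p x = true) :
    (l₁ ++ l₂).dropWhile p = l₂.dropWhile p := by
  induction l₁ with
  | nil => simp
  | cons a l ih =>
    simp only [cons_append, dropWhile_cons, h a (by simp)]
    simp [ih (fun x hx => h x (by simp [hx]))]

lemma takeWhile_eq_nil_all {α} {p : α → Bool} {l : List α} (h : ∀ x ∈ l, p x = false) :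
    l.takeWhile p = [] := by
  cases l with
  | nil => simp
  | cons a l => simp [takeWhile_cons, h a (by simp)]

lemma dropWhile_eq_self_all {α} {p : α → Bool} {l : List α} (h : ∀ x ∈ l, p x = false) :
    l.dropWhile p = l := by
  cases l with
  | nil => simp
  | cons a l => simp [dropWhile_cons, h a (by simp)]

/-- elements of dropWhile (< t) of an increasing list are ≥ t -/
lemma mem_dropWhile_inc {l : List ℕ} (h : l.Pairwise (· < ·)) {t x : ℕ}
    (hx : x ∈ l.dropWhile (fun y => y < t)) : t ≤ x := by
  induction l with
  | nil => simp at hx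
  | cons a l ih =>
    rw [pairwise_cons] at h
    by_cases hat : a < t
    · rw [dropWhile_cons] at hx
      simp [hat] at hx
      exact ih h.2 hx
    · rw [dropWhile_cons] at hx
      simp [hat] at hx
      rcases hx with rfl | hx'
      · omega
      · have := h.1 x hx'; omega

/-- elements of dropWhile (t ≤ ·) of a decreasing list are < t -/
lemma mem_dropWhile_dec {l : List ℕ} (h : l.Pairwise (· > ·)) {t x : ℕ}
    (hx : x ∈ l.dropWhile (fun y => t ≤ y)) : x < t := by
  induction l with
  | nil => simp at hx
  | cons a l ih =>
    rw [pairwise_cons] at h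
    by_cases hat : t ≤ a
    · rw [dropWhile_cons] at hx
      simp [hat] at hx
      exact ih h.2 hx
    · rw [dropWhile_cons] at hx
      simp [hat] at hx
      rcases hx with rfl | hx'
      · omega
      · have := h.1 x hx'; omega



lemma cnt_nonneg (k l) : 0 ≤ cnt k l := Int.natCast_nonneg _

lemma cnt_eq_zero {k : ℕ} {l : List ℕ} (h : ∀ x ∈ l, x < k) : cnt k l = 0 := by
  unfold cnt
  norm_cast
  rw [countP_eq_zero]
  intro a ha
  simpa using (h a ha)

lemma cnt_eq_length {k : ℕ} {l : List ℕ} (h : ∀ x ∈ l, k ≤ x) : cnt k l = l.length := by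
  unfold cnt
  norm_cast
  rw [countP_eq_length]
  intro a ha
  simpa using (h a ha)

lemma cnt_append (k : ℕ) (l₁ l₂ : List ℕ) : cnt k (l₁ ++ l₂) = cnt k l₁ + cnt k l₂ := by
  unfold cnt; rw [countP_append]; push_cast; ring

lemma cnt_reverse (k : ℕ) (l : List ℕ) : cnt k l.reverse = cnt k l := by
  unfold cnt; rw [countP_reverse]

/-- step lemma: cnt k l ≤ cnt (k+1) l + 1 when l has no duplicates -/
lemma cnt_step {l : List ℕ} (h : l.Pairwise (· ≠ ·)) (k : ℕ) :
    cnt k l ≤ cnt (k + 1) l + 1 ∧ cnt (k + 1) l ≤ cnt k l := by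
  induction l with
  | nil => simp [cnt]
  | cons a l ih =>
    rw [pairwise_cons] at h
    obtain ⟨h1, h2⟩ := h
    have ih' := ih h2
    have e1 : ∀ j : ℕ, cnt j (a :: l) = (if j ≤ a then 1 else 0) + cnt j l := by
      intro j
      unfold cnt
      rw [countP_cons]
      by_cases hj : j ≤ a <;> simp [hj] <;> push_cast <;> ring
    rw [e1 k, e1 (k+1)]
    by_cases hak : k + 1 ≤ a
    · have : k ≤ a := by omega
      simp [hak, this]; omega
    · by_cases hak2 : k ≤ a
      · -- a = k, so no element of l equals k; cnt k l = cnt (k+1) l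
        have ha : a = k := by omega
        have : cnt k l = cnt (k+1) l := by
          unfold cnt
          norm_cast
          apply List.countP_congr
          intro x hx
          have : x ≠ a := (h1 x hx).symm
          constructor <;> intro hh <;> simp at hh ⊢ <;> omega
        simp only [if_neg hak, if_pos hak2, this]
        omega
      · simp [hak, hak2]; omega

/-- discrete IVT: walk with upward steps ≤ 1 going down from hi to lo -/
lemma ivt {f : ℕ → ℤ} (hstep : ∀ k, f k ≤ f (k + 1) + 1) :
    ∀ d lo hi, hi = lo + d → 1 ≤ f lo → f hi ≤ 1 → ∃ k, lo ≤ k ∧ k ≤ hi ∧ f k = 1 := by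
  intro d
  induction d with
  | zero =>
    intro lo hi hh h1 h2
    have hh2 : f hi = f lo := by rw [show hi = lo by omega]
    exact ⟨lo, le_refl _, by omega, by omega⟩
  | succ d ih =>
    intro lo hi hh h1 h2
    by_cases hlo : f lo = 1
    · exact ⟨lo, le_refl _, by omega, hlo⟩
    · have h1' : 1 ≤ f (lo + 1) := by have := hstep lo; omega
      obtain ⟨k, hk1, hk2, hk3⟩ := ih (lo + 1) hi (by omega) h1' h2
      exact ⟨k, by omega, hk2, hk3⟩


/-- for an increasing list, length of dropWhile (< t) is the count of elements ≥ t -/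
lemma len_dropWhile_inc {l : List ℕ} (h : l.Pairwise (· < ·)) (t : ℕ) :
    ((l.dropWhile (fun y => y < t)).length : ℤ) = cnt t l := by
  induction l with
  | nil => simp [cnt]
  | cons a l ih =>
    rw [pairwise_cons] at h
    have e1 : cnt t (a :: l) = (if t ≤ a then 1 else 0) + cnt t l := by
      unfold cnt
      rw [countP_cons]
      by_cases hj : t ≤ a <;> simp [hj] <;> push_cast <;> ring
    rw [dropWhile_cons, e1]
    by_cases hat : a < t
    · have : ¬ t ≤ a := by omega
      simp only [hat, decide_eq_true_eq, if_true, this, if_false]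
      simpa using ih h.2
    · have h2 : t ≤ a := by omega
      simp only [hat, decide_eq_true_eq, if_false, h2, if_true]
      have : cnt t l = l.length := by
        unfold cnt
        norm_cast
        rw [countP_eq_length]
        intro x hx
        have := h.1 x hx
        simp; omega
      rw [this]
      simp [length_cons]
      push_cast
      ring

/-- for a decreasing list, length of takeWhile (t ≤ ·) is the count of elements ≥ t -/
lemma len_takeWhile_dec {l : List ℕ} (h : l.Pairwise (· > ·)) (t : ℕ) :
    ((l.takeWhile (fun y => t ≤ y)).length : ℤ) = cnt t l := by
  induction l with
  | nil => simp [cnt]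
  | cons a l ih =>
    rw [pairwise_cons] at h
    have e1 : cnt t (a :: l) = (if t ≤ a then 1 else 0) + cnt t l := by
      unfold cnt
      rw [countP_cons]
      by_cases hj : t ≤ a <;> simp [hj] <;> push_cast <;> ring
    rw [takeWhile_cons, e1]
    by_cases hat : t ≤ a
    · simp only [hat, decide_eq_true_eq, if_true]
      have := ih h.2
      simp [length_cons]
      push_cast
      omega
    · simp only [hat, decide_eq_true_eq, if_false]
      have : cnt t l = 0 := by
        unfold cnt
        norm_cast
        rw [countP_eq_zero]
        intro x hx
        have := h.1 x hx
        simp; omega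
      rw [this]
      simp

/-- decreasing positive list: sum and head bounds -/
lemma dec_list_bounds {l : List ℕ} (h : l.Pairwise (· > ·)) (hpos : ∀ x ∈ l, 0 < x) :
    l.length * (l.length + 1) ≤ 2 * l.sum ∧ ∀ x ∈ l.head?, l.length ≤ x := by
  induction l with
  | nil => simp
  | cons a l ih =>
    rw [pairwise_cons] at h
    obtain ⟨ih1, ih2⟩ := ih h.2 (fun x hx => hpos x (by simp [hx]))
    have ha : l.length + 1 ≤ a := by
      cases l with
      | nil => have := hpos a (by simp); simp only [length_nil]; omega
      | cons b l' =>
        have hb := ih2 b (by simp)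
        have := h.1 b (by simp)
        simp at hb ⊢
        omega
    constructor
    · simp only [length_cons, sum_cons]
      have expand : (l.length + 1) * (l.length + 1 + 1) = l.length * (l.length + 1) + 2 * (l.length + 1) := by ring
      rw [expand]
      have : 2 * (a + l.sum) = 2 * a + 2 * l.sum := by ring
      rw [this]
      omega
    · intro x hx
      simp at hx
      subst hx
      simpa using ha



def swA (t : ℕ) (a b : List ℕ) : List ℕ :=
  a.takeWhile (fun y => y < t) ++ (b.takeWhile (fun y => t ≤ y)).reverse
def swB (t : ℕ) (a b : List ℕ) : List ℕ :=
  (a.dropWhile (fun y => y < t)).reverse ++ b.dropWhile (fun y => t ≤ y)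

section pure
variable {a b : List ℕ} {t : ℕ}

-- membership helpers, assuming sortedness where needed
lemma mem_swA (x : ℕ) (hx : x ∈ swA t a b) : x ∈ a ∨ x ∈ b := by
  rcases mem_append.1 hx with h | h
  · exact Or.inl ((takeWhile_sublist _).subset h)
  · exact Or.inr ((takeWhile_sublist _).subset (mem_reverse.1 h))

lemma mem_swB (x : ℕ) (hx : x ∈ swB t a b) : x ∈ a ∨ x ∈ b := by
  rcases mem_append.1 hx with h | h
  · exact Or.inl ((dropWhile_sublist _).subset (mem_reverse.1 h))
  · exact Or.inr ((dropWhile_sublist _).subset h)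

lemma mem_twa (x : ℕ) (hx : x ∈ a.takeWhile (fun y => y < t)) : x < t := by
  have := mem_takeWhile_imp hx; simpa using this

lemma mem_twb (x : ℕ) (hx : x ∈ b.takeWhile (fun y => t ≤ y)) : t ≤ x := by
  have := mem_takeWhile_imp hx; simpa using this

end pure

section sorted
variable {a b : List ℕ} {t : ℕ}
variable (ha : a.Pairwise (· < ·)) (hb : b.Pairwise (· > ·))

include ha in
lemma mem_dwa (x : ℕ) (hx : x ∈ a.dropWhile (fun y => y < t)) : t ≤ x :=
  mem_dropWhile_inc ha hx

include hb in
lemma mem_dwb (x : ℕ) (hx : x ∈ b.dropWhile (fun y => t ≤ y)) : x < t :=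
  mem_dropWhile_dec hb hx

include ha hb in
lemma swA_pairwise : (swA t a b).Pairwise (· < ·) := by
  rw [swA, pairwise_append]
  refine ⟨ha.sublist (takeWhile_sublist _), ?_, ?_⟩
  · rw [pairwise_reverse]
    exact (hb.sublist (takeWhile_sublist _)).imp (fun h => h)
  · intro x hx y hy
    have h1 := mem_twa x hx
    have h2 := mem_twb y (mem_reverse.1 hy)
    omega

include ha hb in
lemma swB_pairwise : (swB t a b).Pairwise (· > ·) := by
  rw [swB, pairwise_append]
  refine ⟨?_, hb.sublist (dropWhile_sublist _), ?_⟩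
  · rw [pairwise_reverse]
    exact (ha.sublist (dropWhile_sublist _)).imp (fun h => h)
  · intro x hx y hy
    have h1 := mem_dwa ha x (mem_reverse.1 hx)
    have h2 := mem_dwb hb y hy
    omega

lemma swAB_sum : (swA t a b).sum + (swB t a b).sum = a.sum + b.sum := by
  rw [swA, swB, sum_append, sum_append, sum_reverse, sum_reverse]
  have h1 := congrArg List.sum (takeWhile_append_dropWhile (l := a) (p := fun y => decide (y < t)))
  have h2 := congrArg List.sum (takeWhile_append_dropWhile (l := b) (p := fun y => decide (t ≤ y)))
  rw [sum_append] at h1 h2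
  omega

include ha in
lemma swA_len : ((swA t a b).length : ℤ) = a.length - cnt t a + ((b.takeWhile (fun y => t ≤ y)).length : ℤ) := by
  rw [swA, length_append, length_reverse]
  have h1 := congrArg List.length (takeWhile_append_dropWhile (l := a) (p := fun y => decide (y < t)))
  rw [length_append] at h1
  have h2 := len_dropWhile_inc ha t
  push_cast
  omega

include ha in
lemma swB_len : ((swB t a b).length : ℤ) = cnt t a + ((b.dropWhile (fun y => t ≤ y)).length : ℤ) := by
  rw [swB, length_append, length_reverse]
  have h2 := len_dropWhile_inc ha t
  push_cast
  omega

include ha hb in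
lemma cnt_swA (k : ℕ) (hk : t ≤ k) : cnt k (swA t a b) = cnt k b := by
  rw [swA, cnt_append, cnt_reverse]
  have h0 : cnt k (a.takeWhile (fun y => y < t)) = 0 :=
    cnt_eq_zero (fun x hx => by have := mem_twa x hx; omega)
  have h2 := congrArg (cnt k) (takeWhile_append_dropWhile (l := b) (p := fun y => decide (t ≤ y)))
  rw [cnt_append] at h2
  have h3 : cnt k (b.dropWhile (fun y => t ≤ y)) = 0 :=
    cnt_eq_zero (fun x hx => by have := mem_dwb hb x hx; omega)
  omega

include ha hb in
lemma cnt_swB (k : ℕ) (hk : t ≤ k) : cnt k (swB t a b) = cnt k a := by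
  rw [swB, cnt_append, cnt_reverse]
  have h2 := congrArg (cnt k) (takeWhile_append_dropWhile (l := a) (p := fun y => decide (y < t)))
  rw [cnt_append] at h2
  have h0 : cnt k (a.takeWhile (fun y => y < t)) = 0 :=
    cnt_eq_zero (fun x hx => by have := mem_twa x hx; omega)
  have h3 : cnt k (b.dropWhile (fun y => t ≤ y)) = 0 :=
    cnt_eq_zero (fun x hx => by have := mem_dwb hb x hx; omega)
  omega

include ha hb in
lemma swap_swap_A : swA t (swA t a b) (swB t a b) = a := by
  have expand : swA t (swA t a b) (swB t a b) =
      (swA t a b).takeWhile (fun y => y < t) ++ ((swB t a b).takeWhile (fun y => t ≤ y)).reverse := rfl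
  rw [expand]
  have e1 : (swA t a b).takeWhile (fun y => y < t) = a.takeWhile (fun y => y < t) := by
    rw [swA, takeWhile_append_all (fun x hx => by simpa using mem_twa x hx),
      takeWhile_eq_nil_all (l := (b.takeWhile (fun y => t ≤ y)).reverse)
        (fun x hx => by have := mem_twb x (mem_reverse.1 hx); simp; omega)]
    simp
  have e2 : (swB t a b).takeWhile (fun y => t ≤ y) = (a.dropWhile (fun y => y < t)).reverse := by
    rw [swB, takeWhile_append_all (fun x hx => by have := mem_dwa ha x (mem_reverse.1 hx); simpa using this),
      takeWhile_eq_nil_all (l := b.dropWhile (fun y => t ≤ y))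
        (fun x hx => by have := mem_dwb hb x hx; simp; omega)]
    simp
  rw [e1, e2, reverse_reverse, takeWhile_append_dropWhile]

include ha hb in
lemma swap_swap_B : swB t (swA t a b) (swB t a b) = b := by
  have expand : swB t (swA t a b) (swB t a b) =
      ((swA t a b).dropWhile (fun y => y < t)).reverse ++ (swB t a b).dropWhile (fun y => t ≤ y) := rfl
  rw [expand]
  have e1 : (swA t a b).dropWhile (fun y => y < t) = (b.takeWhile (fun y => t ≤ y)).reverse := by
    rw [swA, dropWhile_append_all (fun x hx => by simpa using mem_twa x hx),
      dropWhile_eq_self_all (l := (b.takeWhile (fun y => t ≤ y)).reverse)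
        (fun x hx => by have := mem_twb x (mem_reverse.1 hx); simp; omega)]
  have e2 : (swB t a b).dropWhile (fun y => t ≤ y) = b.dropWhile (fun y => t ≤ y) := by
    rw [swB, dropWhile_append_all (fun x hx => by have := mem_dwa ha x (mem_reverse.1 hx); simpa using this),
      dropWhile_eq_self_all (l := b.dropWhile (fun y => t ≤ y))
        (fun x hx => by have := mem_dwb hb x hx; simp; omega)]
  rw [e1, e2, reverse_reverse, takeWhile_append_dropWhile]

end sorted


/-! ## staircase witness -/

def stair : ℕ → List ℕ
  | 0 => []
  | k + 1 => (k + 1) :: stair k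

lemma stair_mem : ∀ k, ∀ x ∈ stair k, 0 < x ∧ x ≤ k := by
  intro k
  induction k with
  | zero => simp [stair]
  | succ k ih =>
    intro x hx
    rw [stair, mem_cons] at hx
    rcases hx with rfl | hx
    · omega
    · have := ih x hx; omega

lemma stair_pairwise (k : ℕ) : (stair k).Pairwise (· > ·) := by
  induction k with
  | zero => simp [stair]
  | succ k ih =>
    rw [stair, pairwise_cons]
    exact ⟨fun x hx => by have := stair_mem k x hx; omega, ih⟩

lemma stair_len (k : ℕ) : (stair k).length = k := by
  induction k with
  | zero => simp [stair]
  | succ k ih => simp [stair, ih]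

lemma stair_sum (k : ℕ) : 2 * (stair k).sum = k * (k + 1) := by
  induction k with
  | zero => simp [stair]
  | succ k ih =>
    rw [stair, sum_cons]
    have : (k + 1) * (k + 1 + 1) = k * (k + 1) + 2 * (k + 1) := by ring
    rw [this]
    omega

/-! ## thresholds and the map -/

def tf (x : List ℕ × ℕ × List ℕ) : ℕ := Nat.findGreatest (fun k => D x.1 x.2.2 k = 1) x.2.1
def tb (x : List ℕ × ℕ × List ℕ) : ℕ := Nat.findGreatest (fun k => D x.1 x.2.2 k = -1) x.2.1

def phi (x : List ℕ × ℕ × List ℕ) : List ℕ × ℕ × List ℕ :=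
  (swA (tf x) x.1 x.2.2, x.2.1, swB (tf x) x.1 x.2.2)
def psi (x : List ℕ × ℕ × List ℕ) : List ℕ × ℕ × List ℕ :=
  (swA (tb x) x.1 x.2.2, x.2.1, swB (tb x) x.1 x.2.2)

lemma phi_spec {n : ℕ} {m : ℤ} (hm : 0 ≤ m) (x : List ℕ × ℕ × List ℕ)
    (hx : IsStrictConvexComposition n (m + 2) x) :
    IsStrictConvexComposition n m (phi x) ∧ psi (phi x) = x ∧
      1 ≤ tf x ∧ D (phi x).1 (phi x).2.2 (tf x) = -1 := by
  obtain ⟨a, c, b⟩ := x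
  obtain ⟨hca, hcb, hc, hmema, hmemb, hsum, hrank⟩ := hx
  simp only at hca hcb hc hmema hmemb hsum hrank ⊢
  have pa : a.Pairwise (· < ·) := isChain_iff_pairwise.mp hca
  have pb : b.Pairwise (· > ·) := isChain_iff_pairwise.mp hcb
  set t := tf (a, c, b) with ht_def
  have ht_def' : t = Nat.findGreatest (fun k => D a b k = 1) c := rfl
  -- walk facts
  have hstep : ∀ k, D a b k ≤ D a b (k + 1) + 1 ∧ D a b (k + 1) ≤ D a b k + 1 := by
    intro k
    have hsa := cnt_step (pa.imp (fun h => Nat.ne_of_lt h)) k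
    have hsb := cnt_step (pb.imp (fun h => Nat.ne_of_gt h)) k
    unfold D
    omega
  have h1 : D a b 1 = m + 2 := by
    unfold D
    rw [cnt_eq_length (l := a) (fun x hx => (hmema x hx).1),
      cnt_eq_length (l := b) (fun x hx => (hmemb x hx).1)]
    omega
  have hcgen : ∀ k, c ≤ k → D a b k = 0 := by
    intro k hk
    unfold D
    rw [cnt_eq_zero (l := a) (fun x hx => by have := (hmema x hx).2; omega),
      cnt_eq_zero (l := b) (fun x hx => by have := (hmemb x hx).2; omega)]
    ring
  have ht1 : D a b t = 1 ∧ 1 ≤ t ∧ t ≤ c := by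
    obtain ⟨k, hk1, hk2, hk3⟩ := ivt (fun k => (hstep k).1) (c - 1) 1 c (by omega)
      (by rw [h1]; omega) (by rw [hcgen c le_rfl]; norm_num)
    rw [ht_def']
    exact ⟨Nat.findGreatest_spec (P := fun k => D a b k = 1) hk2 hk3, le_trans hk1 (Nat.le_findGreatest hk2 hk3),
      Nat.findGreatest_le c⟩
  have habove : ∀ k, t < k → D a b k ≤ 0 := by
    intro k hk
    by_cases hkc : k ≤ c
    · by_contra hcon
      push_neg at hcon
      obtain ⟨k', hk1', hk2', hk3'⟩ := ivt (fun j => (hstep j).1) (c - k) k c (by omega)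
        (by omega) (by rw [hcgen c le_rfl]; norm_num)
      rw [ht_def'] at hk
      exact absurd hk3' (Nat.findGreatest_is_greatest (lt_of_lt_of_le hk hk1') hk2')
    · rw [hcgen k (by omega)]
  -- image components
  have hphi : phi (a, c, b) = (swA t a b, c, swB t a b) := rfl
  -- counts of image
  have hDim : ∀ k, t ≤ k → D (swA t a b) (swB t a b) k = - D a b k := by
    intro k hk
    unfold D
    rw [cnt_swA pa pb k hk, cnt_swB pa pb k hk]
    ring
  -- lengths
  have hlenA : ((swA t a b).length : ℤ) = (a.length : ℤ) - cnt t a + cnt t b := by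
    rw [swA_len pa, len_takeWhile_dec pb]
  have hlenB : ((swB t a b).length : ℤ) = cnt t a + (b.length : ℤ) - cnt t b := by
    rw [swB_len pa]
    have h1' := congrArg List.length (takeWhile_append_dropWhile (l := b) (p := fun y => decide (t ≤ y)))
    rw [length_append] at h1'
    have h2' := len_takeWhile_dec pb (t := t)
    push_cast
    omega
  have hDt : D a b t = 1 := ht1.1
  have hDt' : cnt t b - cnt t a = 1 := hDt
  -- the image is a strictly convex composition of rank m
  have himage : IsStrictConvexComposition n m (swA t a b, c, swB t a b) := by
    refine ⟨?_, ?_, hc, ?_, ?_, ?_, ?_⟩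
    · exact isChain_iff_pairwise.mpr (swA_pairwise pa pb)
    · exact isChain_iff_pairwise.mpr (swB_pairwise pa pb)
    · intro x hx
      rcases mem_swA x hx with h | h
      · exact hmema x h
      · exact hmemb x h
    · intro x hx
      rcases mem_swB x hx with h | h
      · exact hmema x h
      · exact hmemb x h
    · show (swA t a b).sum + c + (swB t a b).sum = n
      have := swAB_sum (a := a) (b := b) (t := t)
      omega
    · show ((swB t a b).length : ℤ) - ((swA t a b).length : ℤ) = m
      omega
  -- inverse threshold equals t
  have htb : tb (swA t a b, c, swB t a b) = t := by
    have htb_def : tb (swA t a b, c, swB t a b) =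
        Nat.findGreatest (fun k => D (swA t a b) (swB t a b) k = -1) c := rfl
    have hDt2 : D (swA t a b) (swB t a b) t = -1 := by rw [hDim t le_rfl, hDt]
    have hge : t ≤ tb (swA t a b, c, swB t a b) := by
      rw [htb_def]
      exact Nat.le_findGreatest ht1.2.2 hDt2
    rcases Nat.lt_or_ge t (tb (swA t a b, c, swB t a b)) with hlt | hle
    · exfalso
      have hspec : D (swA t a b) (swB t a b) (tb (swA t a b, c, swB t a b)) = -1 := by
        rw [htb_def]
        exact Nat.findGreatest_spec (P := fun k => D (swA t a b) (swB t a b) k = -1)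
          ht1.2.2 hDt2
      rw [hDim _ (le_of_lt hlt)] at hspec
      have := habove _ hlt
      omega
    · omega
  refine ⟨himage, ?_, ht1.2.1, by rw [hphi]; exact (by rw [hDim t le_rfl, hDt])⟩
  -- psi (phi x) = x
  rw [hphi]
  show (swA (tb (swA t a b, c, swB t a b)) (swA t a b) (swB t a b), c,
      swB (tb (swA t a b, c, swB t a b)) (swA t a b) (swB t a b)) = (a, c, b)
  rw [htb, swap_swap_A pa pb, swap_swap_B pa pb]

lemma n_bound {n : ℕ} {m : ℤ} (hm : 0 ≤ m) (x : List ℕ × ℕ × List ℕ)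
    (hx : IsStrictConvexComposition n m x) :
    m.toNat * (m.toNat + 1) + 2 * (m.toNat + 1) ≤ 2 * n := by
  obtain ⟨a, c, b⟩ := x
  obtain ⟨hca, hcb, hc, hmema, hmemb, hsum, hrank⟩ := hx
  simp only at hca hcb hc hmema hmemb hsum hrank
  have pb : b.Pairwise (· > ·) := isChain_iff_pairwise.mp hcb
  obtain ⟨hbsum, hbhead⟩ := dec_list_bounds pb (fun x hx => (hmemb x hx).1)
  have hm' : (m.toNat : ℤ) = m := Int.toNat_of_nonneg hm
  have hlen : m.toNat ≤ b.length := by omega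
  have hcm : m.toNat + 1 ≤ c := by
    cases b with
    | nil => simp at hlen; omega
    | cons h l =>
      have h1 := hbhead h (by simp)
      have h2 := (hmemb h (by simp)).2
      simp at h1 hlen
      omega
  have hp : m.toNat * (m.toNat + 1) ≤ b.length * (b.length + 1) :=
    Nat.mul_le_mul (by omega) (by omega)
  omega

end SCCproof

/-- Part of Theorem 4.3 of the paper: for all integers `m, n ≥ 0` with `X_d(m,n) ≠ 0`,
`X_d(m,n) > X_d(m+2,n)`. -/
theorem strict_convex_rank_strictly_unimodal (m : ℤ) (hm : 0 ≤ m) (n : ℕ)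
    (hne : Xd m n ≠ 0) :
    Xd (m + 2) n < Xd m n := by
  classical
  open SCCproof in
  have hne' : Nat.card {t : List ℕ × ℕ × List ℕ // IsStrictConvexComposition n m t} ≠ 0 := hne
  obtain ⟨hnonempty, hfin⟩ := Nat.card_ne_zero.mp hne'
  obtain ⟨⟨x₀, hx₀⟩⟩ := hnonempty
  have hbound := SCCproof.n_bound hm x₀ hx₀
  have hm' : (m.toNat : ℤ) = m := Int.toNat_of_nonneg hm
  have hS2 : 2 * (SCCproof.stair m.toNat).sum = m.toNat * (m.toNat + 1) := SCCproof.stair_sum m.toNat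
  have hnS : (SCCproof.stair m.toNat).sum + m.toNat + 1 ≤ n := by
    have h := hbound
    rw [← hS2] at h
    omega
  have hwP : IsStrictConvexComposition n m ([], n - (SCCproof.stair m.toNat).sum, SCCproof.stair m.toNat) := by
    refine ⟨List.isChain_iff_pairwise.mpr (by simp), List.isChain_iff_pairwise.mpr (SCCproof.stair_pairwise m.toNat), (by show 1 ≤ n - (SCCproof.stair m.toNat).sum; omega),
      by simp, ?_, ?_, ?_⟩
    · intro x hx
      have := SCCproof.stair_mem m.toNat x hx
      show 0 < x ∧ x < n - (SCCproof.stair m.toNat).sum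
      omega
    · show ([] : List ℕ).sum + (n - (SCCproof.stair m.toNat).sum) + (SCCproof.stair m.toNat).sum = n
      simp only [List.sum_nil]
      omega
    · show ((SCCproof.stair m.toNat).length : ℤ) - (([] : List ℕ).length : ℤ) = m
      simp only [List.length_nil, SCCproof.stair_len]
      omega
  haveI hfinS0 : Finite {t : List ℕ × ℕ × List ℕ // IsStrictConvexComposition n m t} := hfin
  let F : {t : List ℕ × ℕ × List ℕ // IsStrictConvexComposition n (m + 2) t} →
      {t : List ℕ × ℕ × List ℕ // IsStrictConvexComposition n m t} :=
    fun p => ⟨SCCproof.phi p.1, (SCCproof.phi_spec hm p.1 p.2).1⟩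
  have hFinj : Function.Injective F := by
    intro p q h
    have h1 : SCCproof.phi p.1 = SCCproof.phi q.1 := congrArg Subtype.val h
    have h2 := (SCCproof.phi_spec hm p.1 p.2).2.1
    have h3 := (SCCproof.phi_spec hm q.1 q.2).2.1
    apply Subtype.ext
    rw [← h2, ← h3, h1]
  have hw : (⟨([], n - (SCCproof.stair m.toNat).sum, SCCproof.stair m.toNat), hwP⟩ :
      {t : List ℕ × ℕ × List ℕ // IsStrictConvexComposition n m t}) ∉ Set.range F := by
    rintro ⟨p, hp⟩
    have h1 : SCCproof.phi p.1 = ([], n - (SCCproof.stair m.toNat).sum, SCCproof.stair m.toNat) :=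
      congrArg Subtype.val hp
    obtain ⟨-, -, hpos, hD⟩ := SCCproof.phi_spec hm p.1 p.2
    rw [h1] at hD
    simp only at hD
    have hz : SCCproof.cnt (SCCproof.tf p.1) ([] : List ℕ) = 0 := by simp [SCCproof.cnt]
    have hnn := SCCproof.cnt_nonneg (SCCproof.tf p.1) (SCCproof.stair m.toNat)
    unfold SCCproof.D at hD
    omega
  haveI : Finite {t : List ℕ × ℕ × List ℕ // IsStrictConvexComposition n (m + 2) t} :=
    Finite.of_injective F hFinj
  haveI := Fintype.ofFinite {t : List ℕ × ℕ × List ℕ // IsStrictConvexComposition n m t}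
  haveI := Fintype.ofFinite {t : List ℕ × ℕ × List ℕ // IsStrictConvexComposition n (m + 2) t}
  have e1 : Xd (m + 2) n =
      Fintype.card {t : List ℕ × ℕ × List ℕ // IsStrictConvexComposition n (m + 2) t} :=
    Nat.card_eq_fintype_card
  have e2 : Xd m n =
      Fintype.card {t : List ℕ × ℕ × List ℕ // IsStrictConvexComposition n m t} :=
    Nat.card_eq_fintype_card
  rw [e1, e2]
  exact Fintype.card_lt_of_injective_of_notMem F hFinj hw
end

section
/- For all integers m, n ≥ 0: if VO_d(m,n) ≠ 0 then VO_d(m,n) > VO_d(m+2,n), and if XO_d(m,n) ≠ 0 then XO_d(m,n) > XO_d(m+2,n). Here VO_d(m,n) is the number of odd strictly concave compositions of n with rank m, and XO_d(m,n) is the number of odd strictly convex compositions of n with rank m. (Theorem 4.9 of the paper.) -/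
/-- An odd strictly concave composition of `n` with rank `m`: a triple `(a, c, b)` where `a`
is a strictly decreasing list of positive integers, `b` is a strictly increasing list of
positive integers, `c ≥ 0` is the central part, every entry of `a` and of `b` exceeds `c`,
all entries of `a`, `b` and the central part `c` are odd, `Σ a + c + Σ b = n`, and
`(length of b) - (length of a) = m`. -/
def IsOddStrictConcaveComposition (n : ℕ) (m : ℤ) (t : List ℕ × ℕ × List ℕ) : Prop :=
  List.Chain' (fun x y => y < x) t.1 ∧
  List.Chain' (fun x y => x < y) t.2.2 ∧
  (∀ x ∈ t.1, t.2.1 < x) ∧ (∀ x ∈ t.2.2, t.2.1 < x) ∧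
  Odd t.2.1 ∧ (∀ x ∈ t.1, Odd x) ∧ (∀ x ∈ t.2.2, Odd x) ∧
  t.1.sum + t.2.1 + t.2.2.sum = n ∧
  (t.2.2.length : ℤ) - (t.1.length : ℤ) = m

/-- An odd strictly convex composition of `n` with rank `m`: a triple `(a, c, b)` where `a`
is a strictly increasing list of positive integers, `b` is a strictly decreasing list of
positive integers, `c ≥ 1` is the central part, every entry of `a` and of `b` is strictly
less than `c`, all entries of `a`, `b` and the central part `c` are odd,
`Σ a + c + Σ b = n`, and `(length of b) - (length of a) = m`. -/
def IsOddStrictConvexComposition (n : ℕ) (m : ℤ) (t : List ℕ × ℕ × List ℕ) : Prop :=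
  List.Chain' (fun x y => x < y) t.1 ∧
  List.Chain' (fun x y => y < x) t.2.2 ∧
  1 ≤ t.2.1 ∧
  (∀ x ∈ t.1, 0 < x ∧ x < t.2.1) ∧ (∀ x ∈ t.2.2, 0 < x ∧ x < t.2.1) ∧
  Odd t.2.1 ∧ (∀ x ∈ t.1, Odd x) ∧ (∀ x ∈ t.2.2, Odd x) ∧
  t.1.sum + t.2.1 + t.2.2.sum = n ∧
  (t.2.2.length : ℤ) - (t.1.length : ℤ) = m

/-- `VOd m n`: the number of odd strictly concave compositions of `n` with rank `m`. -/
noncomputable def VOd (m : ℤ) (n : ℕ) : ℕ :=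
  Nat.card {t : List ℕ × ℕ × List ℕ // IsOddStrictConcaveComposition n m t}

/-- `XOd m n`: the number of odd strictly convex compositions of `n` with rank `m`. -/
noncomputable def XOd (m : ℤ) (n : ℕ) : ℕ :=
  Nat.card {t : List ℕ × ℕ × List ℕ // IsOddStrictConvexComposition n m t}


open Finset in
section
namespace OddUnimodalAux

/-- Generalized concave-type composition: `t.1` strictly decreasing, `t.2.2` strictly
increasing, per-element predicate `p` on entries and `q` on the center. -/
def GC (p : ℕ → ℕ → Prop) (q : ℕ → Prop) (n : ℕ) (m : ℤ) (t : List ℕ × ℕ × List ℕ) : Prop :=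
  List.Chain' (fun x y => y < x) t.1 ∧ List.Chain' (fun x y => x < y) t.2.2 ∧
  (∀ x ∈ t.1, p t.2.1 x) ∧ (∀ x ∈ t.2.2, p t.2.1 x) ∧ q t.2.1 ∧
  t.1.sum + t.2.1 + t.2.2.sum = n ∧
  (t.2.2.length : ℤ) - (t.1.length : ℤ) = m

/-- Variant with the monotonicity directions swapped (convex-type). -/
def GCv (p : ℕ → ℕ → Prop) (q : ℕ → Prop) (n : ℕ) (m : ℤ) (t : List ℕ × ℕ × List ℕ) : Prop :=
  List.Chain' (fun x y => x < y) t.1 ∧ List.Chain' (fun x y => y < x) t.2.2 ∧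
  (∀ x ∈ t.1, p t.2.1 x) ∧ (∀ x ∈ t.2.2, p t.2.1 x) ∧ q t.2.1 ∧
  t.1.sum + t.2.1 + t.2.2.sum = n ∧
  (t.2.2.length : ℤ) - (t.1.length : ℤ) = m

/-- Finset version: `(c, A, B)`. -/
def GS (p : ℕ → ℕ → Prop) (q : ℕ → Prop) (n : ℕ) (m : ℤ) (x : ℕ × Finset ℕ × Finset ℕ) : Prop :=
  (∀ y ∈ x.2.1, p x.1 y) ∧ (∀ y ∈ x.2.2, p x.1 y) ∧ q x.1 ∧
  (∑ y ∈ x.2.1, y) + x.1 + (∑ y ∈ x.2.2, y) = n ∧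
  (x.2.2.card : ℤ) - (x.2.1.card : ℤ) = m

/-- Base data `(c, I, D)` with `I = A ∩ B`, `D = A Δ B`. -/
def GB (p : ℕ → ℕ → Prop) (q : ℕ → Prop) (n : ℕ) (x : ℕ × Finset ℕ × Finset ℕ) : Prop :=
  Disjoint x.2.1 x.2.2 ∧ (∀ y ∈ x.2.1, p x.1 y) ∧ (∀ y ∈ x.2.2, p x.1 y) ∧ q x.1 ∧
  2 * (∑ y ∈ x.2.1, y) + (∑ y ∈ x.2.2, y) + x.1 = n

/-- Fibered version: base plus the subset `P = B \ A ⊆ D`. -/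
def GF (p : ℕ → ℕ → Prop) (q : ℕ → Prop) (n : ℕ) (m : ℤ)
    (z : (ℕ × Finset ℕ × Finset ℕ) × Finset ℕ) : Prop :=
  GB p q n z.1 ∧ z.2 ⊆ z.1.2.2 ∧ 2 * (z.2.card : ℤ) = (z.1.2.2.card : ℤ) + m

lemma sort_reverse_of_pairwise_gt {l : List ℕ} (h : l.Pairwise (fun x y => y < x)) :
    (l.toFinset.sort (· ≤ ·)).reverse = l := by
  have hn : l.reverse.Nodup := by rw [List.nodup_reverse]; exact h.imp ne_of_gt
  have hs : l.reverse.Pairwise (· ≤ ·) := by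
    apply List.Pairwise.imp le_of_lt; rw [List.pairwise_reverse]; exact h
  have key := (List.toFinset_sort (r := (· ≤ ·)) hn).mpr hs
  rw [List.toFinset_reverse] at key
  rw [key, List.reverse_reverse]

lemma sort_of_pairwise_lt {l : List ℕ} (h : l.Pairwise (fun x y => x < y)) :
    l.toFinset.sort (· ≤ ·) = l :=
  (List.toFinset_sort (r := (· ≤ ·)) (h.imp ne_of_lt)).mpr (h.imp le_of_lt)

lemma sum_sort (A : Finset ℕ) : (A.sort (· ≤ ·)).sum = ∑ y ∈ A, y := by
  conv_rhs => rw [← Finset.sort_toFinset A (· ≤ ·)]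
  rw [List.sum_toFinset _ (Finset.sort_nodup _ _), List.map_id']

noncomputable def equivGS (p : ℕ → ℕ → Prop) (q : ℕ → Prop) (n : ℕ) (m : ℤ) :
    {t : List ℕ × ℕ × List ℕ // GC p q n m t} ≃ {x : ℕ × Finset ℕ × Finset ℕ // GS p q n m x} where
  toFun t := ⟨(t.1.2.1, t.1.1.toFinset, t.1.2.2.toFinset), by
    obtain ⟨⟨a, c, b⟩, h1, h2, h3, h4, h5, h6, h7⟩ := t
    have ha : a.Pairwise (fun x y => y < x) := List.isChain_iff_pairwise.mp h1
    have hb : b.Pairwise (fun x y => x < y) := List.isChain_iff_pairwise.mp h2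
    have na : a.Nodup := ha.imp ne_of_gt
    have nb : b.Nodup := hb.imp ne_of_lt
    refine ⟨fun y hy => h3 y (List.mem_toFinset.mp hy),
      fun y hy => h4 y (List.mem_toFinset.mp hy), h5, ?_, ?_⟩
    · show (∑ x ∈ a.toFinset, x) + c + (∑ x ∈ b.toFinset, x) = n
      rw [List.sum_toFinset _ na, List.sum_toFinset _ nb, List.map_id', List.map_id']
      exact h6
    · show (b.toFinset.card : ℤ) - (a.toFinset.card : ℤ) = m
      rw [List.toFinset_card_of_nodup na, List.toFinset_card_of_nodup nb]
      exact h7⟩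
  invFun x := ⟨((x.1.2.1.sort (· ≤ ·)).reverse, x.1.1, x.1.2.2.sort (· ≤ ·)), by
    obtain ⟨⟨c, A, B⟩, h1, h2, h3, h4, h5⟩ := x
    refine ⟨?_, ?_, ?_, ?_, h3, ?_, ?_⟩
    · refine List.isChain_iff_pairwise.mpr ?_; rw [List.pairwise_reverse]
      exact A.sortedLT_sort.pairwise
    · refine List.isChain_iff_pairwise.mpr ?_
      exact B.sortedLT_sort.pairwise
    · intro y hy
      rw [List.mem_reverse, Finset.mem_sort] at hy
      exact h1 y hy
    · intro y hy
      rw [Finset.mem_sort] at hy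
      exact h2 y hy
    · show ((A.sort (· ≤ ·)).reverse).sum + c + (B.sort (· ≤ ·)).sum = n
      rw [List.sum_reverse, sum_sort, sum_sort]
      exact h4
    · show ((B.sort (· ≤ ·)).length : ℤ) - (((A.sort (· ≤ ·)).reverse).length : ℤ) = m
      rw [List.length_reverse, Finset.length_sort, Finset.length_sort]
      exact h5⟩
  left_inv t := by
    apply Subtype.ext
    obtain ⟨⟨a, c, b⟩, h1, h2, _⟩ := t
    have ha : a.Pairwise (fun x y => y < x) := List.isChain_iff_pairwise.mp h1
    have hb : b.Pairwise (fun x y => x < y) := List.isChain_iff_pairwise.mp h2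
    simp only [Prod.mk.injEq]
    exact ⟨sort_reverse_of_pairwise_gt ha, trivial, sort_of_pairwise_lt hb⟩
  right_inv x := by
    apply Subtype.ext
    obtain ⟨⟨c, A, B⟩, _⟩ := x
    simp only [Prod.mk.injEq]
    refine ⟨trivial, ?_, ?_⟩
    · rw [List.toFinset_reverse, Finset.sort_toFinset]
    · rw [Finset.sort_toFinset]

noncomputable def equivGSv (p : ℕ → ℕ → Prop) (q : ℕ → Prop) (n : ℕ) (m : ℤ) :
    {t : List ℕ × ℕ × List ℕ // GCv p q n m t} ≃ {x : ℕ × Finset ℕ × Finset ℕ // GS p q n m x} where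
  toFun t := ⟨(t.1.2.1, t.1.1.toFinset, t.1.2.2.toFinset), by
    obtain ⟨⟨a, c, b⟩, h1, h2, h3, h4, h5, h6, h7⟩ := t
    have ha : a.Pairwise (fun x y => x < y) := List.isChain_iff_pairwise.mp h1
    have hb : b.Pairwise (fun x y => y < x) := List.isChain_iff_pairwise.mp h2
    have na : a.Nodup := ha.imp ne_of_lt
    have nb : b.Nodup := hb.imp ne_of_gt
    refine ⟨fun y hy => h3 y (List.mem_toFinset.mp hy),
      fun y hy => h4 y (List.mem_toFinset.mp hy), h5, ?_, ?_⟩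
    · show (∑ x ∈ a.toFinset, x) + c + (∑ x ∈ b.toFinset, x) = n
      rw [List.sum_toFinset _ na, List.sum_toFinset _ nb, List.map_id', List.map_id']
      exact h6
    · show (b.toFinset.card : ℤ) - (a.toFinset.card : ℤ) = m
      rw [List.toFinset_card_of_nodup na, List.toFinset_card_of_nodup nb]
      exact h7⟩
  invFun x := ⟨(x.1.2.1.sort (· ≤ ·), x.1.1, (x.1.2.2.sort (· ≤ ·)).reverse), by
    obtain ⟨⟨c, A, B⟩, h1, h2, h3, h4, h5⟩ := x
    refine ⟨?_, ?_, ?_, ?_, h3, ?_, ?_⟩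
    · refine List.isChain_iff_pairwise.mpr ?_
      exact A.sortedLT_sort.pairwise
    · refine List.isChain_iff_pairwise.mpr ?_; rw [List.pairwise_reverse]
      exact B.sortedLT_sort.pairwise
    · intro y hy
      rw [Finset.mem_sort] at hy
      exact h1 y hy
    · intro y hy
      rw [List.mem_reverse, Finset.mem_sort] at hy
      exact h2 y hy
    · show (A.sort (· ≤ ·)).sum + c + ((B.sort (· ≤ ·)).reverse).sum = n
      rw [List.sum_reverse, sum_sort, sum_sort]
      exact h4
    · show (((B.sort (· ≤ ·)).reverse).length : ℤ) - ((A.sort (· ≤ ·)).length : ℤ) = m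
      rw [List.length_reverse, Finset.length_sort, Finset.length_sort]
      exact h5⟩
  left_inv t := by
    apply Subtype.ext
    obtain ⟨⟨a, c, b⟩, h1, h2, _⟩ := t
    have ha : a.Pairwise (fun x y => x < y) := List.isChain_iff_pairwise.mp h1
    have hb : b.Pairwise (fun x y => y < x) := List.isChain_iff_pairwise.mp h2
    simp only [Prod.mk.injEq]
    exact ⟨sort_of_pairwise_lt ha, trivial, sort_reverse_of_pairwise_gt hb⟩
  right_inv x := by
    apply Subtype.ext
    obtain ⟨⟨c, A, B⟩, _⟩ := x
    simp only [Prod.mk.injEq]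
    refine ⟨trivial, ?_, ?_⟩
    · rw [Finset.sort_toFinset]
    · rw [List.toFinset_reverse, Finset.sort_toFinset]
noncomputable def equivGF (p : ℕ → ℕ → Prop) (q : ℕ → Prop) (n : ℕ) (m : ℤ) :
    {x : ℕ × Finset ℕ × Finset ℕ // GS p q n m x} ≃
    {z : (ℕ × Finset ℕ × Finset ℕ) × Finset ℕ // GF p q n m z} where
  toFun x := ⟨((x.1.1, x.1.2.1 ∩ x.1.2.2, (x.1.2.1 \ x.1.2.2) ∪ (x.1.2.2 \ x.1.2.1)),
      x.1.2.2 \ x.1.2.1), by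
    obtain ⟨⟨c, A, B⟩, h1, h2, h3, h4, h5⟩ := x
    dsimp only at h1 h2 h3 h4 h5
    have hsum : (∑ x ∈ A, x) + (∑ x ∈ B, x)
        = 2*(∑ x ∈ A ∩ B, x) + (∑ x ∈ (A \ B) ∪ (B \ A), x) := by
      rw [Finset.sum_union disjoint_sdiff_sdiff]
      have e1 := Finset.sum_inter_add_sum_sdiff A B (fun x => x)
      have e2 := Finset.sum_inter_add_sum_sdiff B A (fun x => x)
      rw [Finset.inter_comm B A] at e2
      omega
    have hcard : A.card + B.card = 2*((A ∩ B).card) + ((A \ B) ∪ (B \ A)).card := by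
      rw [Finset.card_union_of_disjoint disjoint_sdiff_sdiff]
      have e1 := Finset.card_inter_add_card_sdiff A B
      have e2 := Finset.card_inter_add_card_sdiff B A
      rw [Finset.inter_comm B A] at e2
      omega
    have e3 := Finset.card_inter_add_card_sdiff B A
    rw [Finset.inter_comm B A] at e3
    refine ⟨⟨?_, ?_, ?_, h3, by dsimp only; omega⟩, Finset.subset_union_right, by dsimp only; omega⟩
    · rw [Finset.disjoint_left]
      intro y hy hy2
      rw [Finset.mem_inter] at hy
      rw [Finset.mem_union, Finset.mem_sdiff, Finset.mem_sdiff] at hy2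
      tauto
    · intro y hy
      exact h1 y (Finset.mem_inter.mp hy).1
    · intro y hy
      rcases Finset.mem_union.mp hy with h | h
      · exact h1 y (Finset.mem_sdiff.mp h).1
      · exact h2 y (Finset.mem_sdiff.mp h).1⟩
  invFun z := ⟨(z.1.1.1, z.1.1.2.1 ∪ (z.1.1.2.2 \ z.1.2), z.1.1.2.1 ∪ z.1.2), by
    obtain ⟨⟨⟨c, I, D⟩, P⟩, ⟨hdis, hI, hD, hq, hsum⟩, hPD, hcard⟩ := z
    have d1 : Disjoint I (D \ P) := hdis.mono_right (Finset.sdiff_subset)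
    have d2 : Disjoint I P := hdis.mono_right hPD
    have s1 : (∑ x ∈ D \ P, x) + (∑ x ∈ P, x) = ∑ x ∈ D, x := Finset.sum_sdiff hPD
    have c1 : (D \ P).card + P.card = D.card := Finset.card_sdiff_add_card_eq_card hPD
    refine ⟨?_, ?_, hq, ?_, ?_⟩
    · intro y hy
      rcases Finset.mem_union.mp hy with h | h
      · exact hI y h
      · exact hD y (Finset.mem_sdiff.mp h).1
    · intro y hy
      rcases Finset.mem_union.mp hy with h | h
      · exact hI y h
      · exact hD y (hPD h)
    · show (∑ y ∈ I ∪ (D \ P), y) + c + (∑ y ∈ I ∪ P, y) = n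
      rw [Finset.sum_union d1, Finset.sum_union d2]
      dsimp only at hsum
      omega
    · show ((I ∪ P).card : ℤ) - ((I ∪ (D \ P)).card : ℤ) = m
      rw [Finset.card_union_of_disjoint d1, Finset.card_union_of_disjoint d2]
      dsimp only at hcard
      omega⟩
  left_inv x := by
    apply Subtype.ext
    obtain ⟨⟨c, A, B⟩, _⟩ := x
    simp only [Prod.mk.injEq]
    refine ⟨trivial, ?_, ?_⟩
    · ext y
      simp only [Finset.mem_union, Finset.mem_inter, Finset.mem_sdiff]
      tauto
    · ext y
      simp only [Finset.mem_union, Finset.mem_inter, Finset.mem_sdiff]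
      tauto
  right_inv z := by
    apply Subtype.ext
    obtain ⟨⟨⟨c, I, D⟩, P⟩, ⟨hdis, _, _, _, _⟩, hPD, _⟩ := z
    simp only [Prod.mk.injEq]
    refine ⟨⟨trivial, ?_, ?_⟩, ?_⟩ <;>
    · ext y
      have hid : y ∈ I → y ∉ D := fun hy => Finset.disjoint_left.mp hdis hy
      have hpd : y ∈ P → y ∈ D := fun hy => hPD hy
      simp only [Finset.mem_union, Finset.mem_inter, Finset.mem_sdiff]
      tauto
noncomputable def baseF (p : ℕ → ℕ → Prop) (q : ℕ → Prop) (n : ℕ) :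
    Finset (ℕ × Finset ℕ × Finset ℕ) :=
  @Finset.filter _ (GB p q n) (Classical.decPred _)
    ((range (n+1)) ×ˢ (range (n+1)).powerset ×ˢ (range (n+1)).powerset)

noncomputable def Fbig (p : ℕ → ℕ → Prop) (q : ℕ → Prop) (n : ℕ) (m : ℤ) :
    Finset ((ℕ × Finset ℕ × Finset ℕ) × Finset ℕ) :=
  @Finset.filter _ (GF p q n m) (Classical.decPred _)
    (((range (n+1)) ×ˢ (range (n+1)).powerset ×ˢ (range (n+1)).powerset) ×ˢ (range (n+1)).powerset)

def fib (y : ℕ × Finset ℕ × Finset ℕ) (μ : ℤ) : Finset (Finset ℕ) :=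
  y.2.2.powerset.filter (fun P => 2*(P.card:ℤ) = (y.2.2.card:ℤ) + μ)

variable {p : ℕ → ℕ → Prop} {q : ℕ → Prop} {n : ℕ} {m : ℤ}

lemma mem_baseF_raw {y : ℕ × Finset ℕ × Finset ℕ} :
    y ∈ baseF p q n ↔
      y ∈ (range (n+1)) ×ˢ (range (n+1)).powerset ×ˢ (range (n+1)).powerset ∧ GB p q n y :=
  @Finset.mem_filter _ _ (Classical.decPred _) _ _

lemma mem_Fbig_raw {z : (ℕ × Finset ℕ × Finset ℕ) × Finset ℕ} :
    z ∈ Fbig p q n m ↔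
      z ∈ ((range (n+1)) ×ˢ (range (n+1)).powerset ×ˢ (range (n+1)).powerset) ×ˢ
        (range (n+1)).powerset ∧ GF p q n m z :=
  @Finset.mem_filter _ _ (Classical.decPred _) _ _

lemma mem_Fbig (hp : ∀ c x, p c x → 0 < x) {z : (ℕ × Finset ℕ × Finset ℕ) × Finset ℕ} :
    z ∈ Fbig p q n m ↔ GF p q n m z := by
  obtain ⟨⟨c, I, D⟩, P⟩ := z
  rw [mem_Fbig_raw]
  refine ⟨fun h => h.2, fun h => ⟨?_, h⟩⟩
  obtain ⟨⟨hdis, hI, hD, hq, hsum⟩, hPD, hcard⟩ := h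
  dsimp only at hdis hI hD hq hsum hPD hcard
  have hIr : I ⊆ range (n+1) := by
    intro y hy
    have h1 : y ≤ ∑ x ∈ I, x := Finset.single_le_sum (f := fun y => y) (fun i _ => Nat.zero_le _) hy
    rw [mem_range]; omega
  have hDr : D ⊆ range (n+1) := by
    intro y hy
    have h1 : y ≤ ∑ x ∈ D, x := Finset.single_le_sum (f := fun y => y) (fun i _ => Nat.zero_le _) hy
    rw [mem_range]; omega
  simp only [Finset.mem_product, Finset.mem_powerset, mem_range]
  exact ⟨⟨by omega, hIr, hDr⟩, hPD.trans hDr⟩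

lemma Fbig_parts (hp : ∀ c x, p c x → 0 < x) {z : (ℕ × Finset ℕ × Finset ℕ) × Finset ℕ}
    (hz : z ∈ Fbig p q n m) : z.1 ∈ baseF p q n ∧ z.2 ∈ fib z.1 m := by
  have hGF := (mem_Fbig hp).mp hz
  rw [mem_Fbig_raw, Finset.mem_product] at hz
  refine ⟨?_, ?_⟩
  · rw [mem_baseF_raw]
    exact ⟨hz.1.1, hGF.1⟩
  · rw [fib, Finset.mem_filter, Finset.mem_powerset]
    exact ⟨hGF.2.1, hGF.2.2⟩

lemma mem_Fbig_of_parts (hp : ∀ c x, p c x → 0 < x) {y : ℕ × Finset ℕ × Finset ℕ}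
    {P : Finset ℕ} (hy : y ∈ baseF p q n) (hP : P ∈ fib y m) : (y, P) ∈ Fbig p q n m := by
  rw [mem_baseF_raw] at hy
  rw [fib, Finset.mem_filter, Finset.mem_powerset] at hP
  rw [mem_Fbig hp]
  exact ⟨hy.2, hP.1, hP.2⟩

lemma card_Fbig (hp : ∀ c x, p c x → 0 < x) :
    (Fbig p q n m).card = ∑ y ∈ baseF p q n, (fib y m).card := by
  classical
  rw [Finset.card_eq_sum_card_fiberwise (f := Prod.fst) (t := baseF p q n)
    (fun z hz => (Fbig_parts hp hz).1)]
  refine Finset.sum_congr rfl fun y hy => ?_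
  refine Finset.card_bij (fun z _ => z.2) ?_ ?_ ?_
  · intro z hz
    rw [Finset.mem_filter] at hz
    have := (Fbig_parts hp hz.1).2
    rwa [hz.2] at this
  · intro z1 h1 z2 h2 he
    rw [Finset.mem_filter] at h1 h2
    exact Prod.ext (h1.2.trans h2.2.symm) he
  · intro P hP
    exact ⟨(y, P), Finset.mem_filter.mpr ⟨mem_Fbig_of_parts hp hy hP, rfl⟩, rfl⟩

lemma fib_le (y : ℕ × Finset ℕ × Finset ℕ) (hm : 0 ≤ m) :
    (fib y (m+2)).card ≤ (fib y m).card ∧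
      ((fib y m).Nonempty → (fib y (m+2)).card < (fib y m).card) := by
  obtain ⟨cy, Iy, D⟩ := y
  by_cases h : ∃ j : ℕ, (D.card:ℤ) + m = 2*j
  · obtain ⟨j, hj⟩ := h
    have e1 : fib (cy, Iy, D) m = D.powersetCard j := by
      ext P
      rw [fib, Finset.mem_filter, Finset.mem_powerset, Finset.mem_powersetCard]
      dsimp only
      constructor
      · rintro ⟨h1, h2⟩; exact ⟨h1, by omega⟩
      · rintro ⟨h1, h2⟩; exact ⟨h1, by omega⟩
    have e2 : fib (cy, Iy, D) (m+2) = D.powersetCard (j+1) := by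
      ext P
      rw [fib, Finset.mem_filter, Finset.mem_powerset, Finset.mem_powersetCard]
      dsimp only
      constructor
      · rintro ⟨h1, h2⟩; exact ⟨h1, by omega⟩
      · rintro ⟨h1, h2⟩; exact ⟨h1, by omega⟩
    rw [e1, e2, Finset.card_powersetCard, Finset.card_powersetCard]
    have hk2j : D.card ≤ 2*j := by omega
    have he := Nat.choose_succ_right_eq D.card j
    constructor
    · have h2 : D.card - j ≤ j + 1 := by omega
      nlinarith [he, h2]
    · rintro ⟨P, hP⟩
      rw [Finset.mem_powersetCard] at hP
      have hjk : j ≤ D.card := hP.2 ▸ Finset.card_le_card hP.1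
      have hpos : 0 < Nat.choose D.card j := Nat.choose_pos hjk
      have h2 : D.card - j ≤ j := by omega
      nlinarith [he, h2, hpos]
  · have e1 : fib (cy, Iy, D) m = ∅ := by
      rw [Finset.eq_empty_iff_forall_notMem]
      intro P hP
      rw [fib, Finset.mem_filter] at hP
      dsimp only at hP
      exact h ⟨P.card, by omega⟩
    have e2 : fib (cy, Iy, D) (m+2) = ∅ := by
      rw [Finset.eq_empty_iff_forall_notMem]
      intro P hP
      rw [fib, Finset.mem_filter] at hP
      dsimp only at hP
      exact h ⟨P.card - 1, by omega⟩
    rw [e1, e2]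
    simp

theorem GS_card_lt (p : ℕ → ℕ → Prop) (q : ℕ → Prop) (hp : ∀ c x, p c x → 0 < x)
    (n : ℕ) (m : ℤ) (hm : 0 ≤ m)
    (h0 : Nat.card {x : ℕ × Finset ℕ × Finset ℕ // GS p q n m x} ≠ 0) :
    Nat.card {x : ℕ × Finset ℕ × Finset ℕ // GS p q n (m+2) x} <
      Nat.card {x : ℕ × Finset ℕ × Finset ℕ // GS p q n m x} := by
  have key : ∀ μ : ℤ, Nat.card {x : ℕ × Finset ℕ × Finset ℕ // GS p q n μ x}
      = (Fbig p q n μ).card := by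
    intro μ
    rw [Nat.card_congr ((equivGF p q n μ).trans
      (Equiv.subtypeEquivRight (fun z => (mem_Fbig (m := μ) hp).symm)))]
    exact Nat.card_eq_finsetCard _
  have hne : (Fbig p q n m).Nonempty :=
    Finset.card_pos.mp (Nat.pos_of_ne_zero (by rwa [key m] at h0))
  obtain ⟨z, hz⟩ := hne
  obtain ⟨hzb, hzf⟩ := Fbig_parts hp hz
  rw [key (m+2), key m, card_Fbig hp, card_Fbig hp]
  exact Finset.sum_lt_sum (fun y _ => (fib_le y hm).1)
    ⟨z.1, hzb, (fib_le z.1 hm).2 ⟨z.2, hzf⟩⟩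

end OddUnimodalAux

lemma VOd_eq_GS (m : ℤ) (n : ℕ) :
    VOd m n = Nat.card {x : ℕ × Finset ℕ × Finset ℕ //
      OddUnimodalAux.GS (fun c x => c < x ∧ Odd x) Odd n m x} := by
  have hiff : ∀ t, IsOddStrictConcaveComposition n m t ↔
      OddUnimodalAux.GC (fun c x => c < x ∧ Odd x) Odd n m t := by
    intro t
    constructor
    · rintro ⟨h1, h2, h3, h4, h5, h6, h7, h8, h9⟩
      exact ⟨h1, h2, fun x hx => ⟨h3 x hx, h6 x hx⟩, fun x hx => ⟨h4 x hx, h7 x hx⟩, h5, h8, h9⟩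
    · rintro ⟨h1, h2, h3, h4, h5, h6, h7⟩
      exact ⟨h1, h2, fun x hx => (h3 x hx).1, fun x hx => (h4 x hx).1, h5,
        fun x hx => (h3 x hx).2, fun x hx => (h4 x hx).2, h6, h7⟩
  rw [VOd, Nat.card_congr ((Equiv.subtypeEquivRight hiff).trans
    (OddUnimodalAux.equivGS (fun c x => c < x ∧ Odd x) Odd n m))]

lemma XOd_eq_GS (m : ℤ) (n : ℕ) :
    XOd m n = Nat.card {x : ℕ × Finset ℕ × Finset ℕ //
      OddUnimodalAux.GS (fun c x => (0 < x ∧ x < c) ∧ Odd x) (fun c => 1 ≤ c ∧ Odd c) n m x} := by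
  have hiff : ∀ t, IsOddStrictConvexComposition n m t ↔
      OddUnimodalAux.GCv (fun c x => (0 < x ∧ x < c) ∧ Odd x) (fun c => 1 ≤ c ∧ Odd c) n m t := by
    intro t
    constructor
    · rintro ⟨h1, h2, h3, h4, h5, h6, h7, h8, h9, h10⟩
      exact ⟨h1, h2, fun x hx => ⟨h4 x hx, h7 x hx⟩, fun x hx => ⟨h5 x hx, h8 x hx⟩,
        ⟨h3, h6⟩, h9, h10⟩
    · rintro ⟨h1, h2, h3, h4, h5, h6, h7⟩
      exact ⟨h1, h2, h5.1, fun x hx => (h3 x hx).1, fun x hx => (h4 x hx).1, h5.2,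
        fun x hx => (h3 x hx).2, fun x hx => (h4 x hx).2, h6, h7⟩
  rw [XOd, Nat.card_congr ((Equiv.subtypeEquivRight hiff).trans
    (OddUnimodalAux.equivGSv (fun c x => (0 < x ∧ x < c) ∧ Odd x) (fun c => 1 ≤ c ∧ Odd c) n m))]

end

/-- Theorem 4.9 of the paper: for all integers `m, n ≥ 0`, if `VO_d(m,n) ≠ 0` then
`VO_d(m,n) > VO_d(m+2,n)`, and if `XO_d(m,n) ≠ 0` then `XO_d(m,n) > XO_d(m+2,n)`. -/

theorem odd_strict_compositions_strictly_unimodal (m : ℤ) (hm : 0 ≤ m) (n : ℕ) :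
    (VOd m n ≠ 0 → VOd (m + 2) n < VOd m n) ∧
    (XOd m n ≠ 0 → XOd (m + 2) n < XOd m n) := by
  constructor
  · intro h
    rw [VOd_eq_GS, VOd_eq_GS] at *
    exact OddUnimodalAux.GS_card_lt _ _ (fun c x hx => hx.2.pos) n m hm h
  · intro h
    rw [XOd_eq_GS, XOd_eq_GS] at *
    exact OddUnimodalAux.GS_card_lt _ _ (fun c x hx => hx.1.1) n m hm h
end
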